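/- Let G be a Borel probability measure on ℝ, ν > 0, z ∈ ℝ, k ≥ 1 an integer, and ρ ∈ (0, 1/(e√(2π))). Let f_{G,ν}(z) = ∫ φ((z−τ)/ν) ν⁻¹ dG(τ). Then there exists a constant C_k depending only on k such that | ∫ ((z−τ)/ν)^k φ((z−τ)/ν) ν⁻¹ dG(τ) | / ( f_{G,ν}(z) ∨ (ρ/ν) ) ≤ C_k (log(1/(√(2π)ρ)))^{k/2}. -/

import Mathlib

open MeasureTheory

/-- The standard normal density `φ(t) = (2π)^{-1/2} exp(−t²/2)`. -/
noncomputable def gaussPdf (t : ℝ) : ℝ := (Real.sqrt (2 * Real.pi))⁻¹ * Real.exp (-(t ^ 2) / 2)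

/-- The Gaussian mixture density `f_{G,ν}(z) = ∫ φ((z−τ)/ν) ν⁻¹ dG(τ)`. -/
noncomputable def mixDens (G : Measure ℝ) (ν z : ℝ) : ℝ :=
  ∫ τ, gaussPdf ((z - τ) / ν) * ν⁻¹ ∂G

/-!
Split the mixture at the level `T = √(2 log (1/(√(2π) ρ)))`, where `φ(T) = ρ`. Where
`|(z−τ)/ν| ≤ T` the weight `((z−τ)/ν)^k` is at most `T^k`; beyond `T` the Gaussian tail
beats the polynomial, `|t|^k φ(t) ≤ e^{1+k²/4} T^k φ(T)`. Integrating against `G` bounds the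
numerator by `e^{1+k²/4} T^k (f_{G,ν}(z) + ρ/ν) ≤ 2 e^{1+k²/4} T^k (f_{G,ν}(z) ∨ ρ/ν)`,
and `T^k = 2^{k/2} (log (1/(√(2π) ρ)))^{k/2}`.
-/

open Real

lemma gaussPdf_nonneg (t : ℝ) : 0 ≤ gaussPdf t := by
  unfold gaussPdf; positivity

lemma gaussPdf_le_inv_sqrt_two_pi (t : ℝ) : gaussPdf t ≤ (√(2 * π))⁻¹ := by
  unfold gaussPdf
  exact mul_le_of_le_one_right (by positivity) (exp_le_one_iff.2 (by nlinarith [sq_nonneg t]))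

@[fun_prop]
lemma continuous_gaussPdf : Continuous gaussPdf := by
  unfold gaussPdf; fun_prop

lemma gaussPdf_sqrt_two_mul_log {ρ : ℝ} (hρ : 0 < ρ) (hρ1 : √(2 * π) * ρ ≤ 1) :
    gaussPdf √(2 * log (1 / (√(2 * π) * ρ))) = ρ := by
  have hs : 0 < √(2 * π) := by positivity
  have hlog : 0 ≤ log (1 / (√(2 * π) * ρ)) :=
    log_nonneg (by rw [le_div_iff₀ (by positivity)]; linarith)
  rw [gaussPdf, sq_sqrt (by positivity), one_div, log_inv,
    show -(2 * -log (√(2 * π) * ρ)) / 2 = log (√(2 * π) * ρ) by ring,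
    exp_log (by positivity)]
  field_simp

lemma pow_le_exp_nat_mul_sub_one {r : ℝ} (hr : 0 ≤ r) (k : ℕ) :
    r ^ k ≤ exp (k * (r - 1)) := by
  rw [exp_nat_mul]
  exact pow_le_pow_left₀ hr (by linarith [add_one_le_exp (r - 1)]) k

lemma abs_pow_mul_gaussPdf_le_of_le (k : ℕ) {t T : ℝ} (hT : √2 ≤ T) (ht : T ≤ |t|) :
    |t| ^ k * gaussPdf t ≤ exp (1 + (k : ℝ) ^ 2 / 4) * T ^ k * gaussPdf T := by
  have hT0 : 0 < T := lt_of_lt_of_le (by positivity) hT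
  have hT2 : 2 ≤ T ^ 2 :=
    (sq_sqrt zero_le_two).symm.le.trans (pow_le_pow_left₀ (sqrt_nonneg 2) hT 2)
  set r := |t| / T
  have hr : 1 ≤ r := (one_le_div hT0).2 ht
  have htr : |t| = r * T := (div_mul_cancel₀ _ hT0.ne').symm
  -- `kr ≤ k²/4 + r²` and `r² - 1 ≤ (r² - 1) T²/2`
  have hexp : k * (r - 1) + -(t ^ 2) / 2 ≤ 1 + (k : ℝ) ^ 2 / 4 + -(T ^ 2) / 2 := by
    rw [← sq_abs t, htr]
    nlinarith [sq_nonneg (r - k / 2),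
      mul_le_mul_of_nonneg_left hT2 (by nlinarith : 0 ≤ r ^ 2 - 1),
      (Nat.cast_nonneg k : (0 : ℝ) ≤ k)]
  have key : r ^ k * exp (-(t ^ 2) / 2) ≤ exp (1 + (k : ℝ) ^ 2 / 4) * exp (-(T ^ 2) / 2) :=
    calc r ^ k * exp (-(t ^ 2) / 2) ≤ exp (k * (r - 1)) * exp (-(t ^ 2) / 2) := by
          gcongr; exact pow_le_exp_nat_mul_sub_one (by linarith) k
      _ ≤ exp (1 + (k : ℝ) ^ 2 / 4) * exp (-(T ^ 2) / 2) := by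
          rw [← exp_add, ← exp_add]; exact exp_le_exp.2 hexp
  calc |t| ^ k * gaussPdf t = (√(2 * π))⁻¹ * T ^ k * (r ^ k * exp (-(t ^ 2) / 2)) := by
        rw [gaussPdf, htr, mul_pow]; ring
    _ ≤ (√(2 * π))⁻¹ * T ^ k * (exp (1 + (k : ℝ) ^ 2 / 4) * exp (-(T ^ 2) / 2)) := by
        gcongr
    _ = exp (1 + (k : ℝ) ^ 2 / 4) * T ^ k * gaussPdf T := by
        rw [gaussPdf]; ring

lemma abs_pow_mul_gaussPdf_le (k : ℕ) {T : ℝ} (hT : √2 ≤ T) (t : ℝ) :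
    |t| ^ k * gaussPdf t ≤ exp (1 + (k : ℝ) ^ 2 / 4) * T ^ k * (gaussPdf t + gaussPdf T) := by
  have hT0 : 0 ≤ T := le_trans (by positivity) hT
  have hE : 1 ≤ exp (1 + (k : ℝ) ^ 2 / 4) := one_le_exp (by positivity)
  rcases le_or_gt |t| T with ht | ht
  · calc |t| ^ k * gaussPdf t ≤ 1 * T ^ k * gaussPdf t := by
          rw [one_mul]; gcongr; exact gaussPdf_nonneg t
      _ ≤ exp (1 + (k : ℝ) ^ 2 / 4) * T ^ k * (gaussPdf t + gaussPdf T) := by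
          gcongr
          · exact gaussPdf_nonneg t
          · exact le_add_of_nonneg_right (gaussPdf_nonneg T)
  · calc |t| ^ k * gaussPdf t ≤ exp (1 + (k : ℝ) ^ 2 / 4) * T ^ k * gaussPdf T :=
          abs_pow_mul_gaussPdf_le_of_le k hT ht.le
      _ ≤ exp (1 + (k : ℝ) ^ 2 / 4) * T ^ k * (gaussPdf t + gaussPdf T) := by
          gcongr; exact le_add_of_nonneg_left (gaussPdf_nonneg t)

lemma abs_integral_pow_mul_gaussPdf_le {α : Type*} [MeasurableSpace α] {μ : Measure α}
    [IsProbabilityMeasure μ] {X : α → ℝ} (hX : AEMeasurable X μ) (k : ℕ) {T : ℝ}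
    (hT : √2 ≤ T) :
    |∫ a, X a ^ k * gaussPdf (X a) ∂μ|
      ≤ exp (1 + (k : ℝ) ^ 2 / 4) * T ^ k * ((∫ a, gaussPdf (X a) ∂μ) + gaussPdf T) := by
  have hint : Integrable (fun a => gaussPdf (X a)) μ := by
    refine Integrable.mono' (integrable_const (√(2 * π))⁻¹)
      (continuous_gaussPdf.comp_aestronglyMeasurable hX.aestronglyMeasurable) ?_
    filter_upwards with a
    rw [norm_of_nonneg (gaussPdf_nonneg _)]
    exact gaussPdf_le_inv_sqrt_two_pi _
  calc |∫ a, X a ^ k * gaussPdf (X a) ∂μ| ≤ ∫ a, |X a ^ k * gaussPdf (X a)| ∂μ :=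
        abs_integral_le_integral_abs
    _ ≤ ∫ a, exp (1 + (k : ℝ) ^ 2 / 4) * T ^ k * (gaussPdf (X a) + gaussPdf T) ∂μ := by
        refine integral_mono_of_nonneg (.of_forall fun _ => abs_nonneg _)
          ((hint.add (integrable_const _)).const_mul _) (.of_forall fun a => ?_)
        change |X a ^ k * gaussPdf (X a)| ≤ _
        rw [abs_mul, abs_pow, abs_of_nonneg (gaussPdf_nonneg _)]
        exact abs_pow_mul_gaussPdf_le k hT (X a)
    _ = exp (1 + (k : ℝ) ^ 2 / 4) * T ^ k * ((∫ a, gaussPdf (X a) ∂μ) + gaussPdf T) := by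
        rw [integral_const_mul, integral_add hint (integrable_const _), integral_const,
          probReal_univ, one_smul]

lemma one_le_log_one_div {x : ℝ} (hx : 0 < x) (hxe : x ≤ (exp 1)⁻¹) : 1 ≤ log (1 / x) := by
  rw [le_log_iff_exp_le (by positivity), le_div_iff₀ hx]
  calc exp 1 * x ≤ exp 1 * (exp 1)⁻¹ := by gcongr
    _ = 1 := mul_inv_cancel₀ (exp_pos 1).ne'

lemma sqrt_two_mul_pow {L : ℝ} (hL : 0 ≤ L) (k : ℕ) :
    √(2 * L) ^ k = √2 ^ k * L ^ ((k : ℝ) / 2) := by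
  rw [sqrt_mul zero_le_two, mul_pow, sqrt_eq_rpow L, ← rpow_natCast (L ^ _) k, ← rpow_mul hL]
  ring_nf

theorem truncated_posterior_moment_bound_general (k : ℕ) :
    ∃ C : ℝ, 0 < C ∧
      ∀ (G : Measure ℝ), IsProbabilityMeasure G →
      ∀ (ν : ℝ), 0 < ν → ∀ (z : ℝ) (ρ : ℝ),
        ρ ∈ Set.Ioo (0:ℝ) (1 / (Real.exp 1 * Real.sqrt (2 * Real.pi))) →
        |∫ τ, ((z - τ) / ν) ^ k * gaussPdf ((z - τ) / ν) * ν⁻¹ ∂G|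
            / (mixDens G ν z ⊔ (ρ / ν))
          ≤ C * (Real.log (1 / (Real.sqrt (2 * Real.pi) * ρ))) ^ ((k : ℝ) / 2) := by
  set E := exp (1 + (k : ℝ) ^ 2 / 4)
  refine ⟨2 * E * √2 ^ k, by positivity, fun G _ ν hν z ρ ⟨hρ, hρ1⟩ => ?_⟩
  set L := log (1 / (√(2 * π) * ρ))
  have hsρ : √(2 * π) * ρ ≤ (exp 1)⁻¹ := by
    rw [lt_div_iff₀ (by positivity)] at hρ1
    rw [← one_div, le_div_iff₀ (exp_pos 1)]
    linarith
  have hL : 1 ≤ L := one_le_log_one_div (by positivity) hsρ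
  have hT : √2 ≤ √(2 * L) := sqrt_le_sqrt (by linarith)
  have hφT : gaussPdf √(2 * L) = ρ :=
    gaussPdf_sqrt_two_mul_log hρ (hsρ.trans (inv_le_one_of_one_le₀ (one_le_exp zero_le_one)))
  have hmax : 0 < mixDens G ν z ⊔ ρ / ν := lt_max_of_lt_right (by positivity)
  rw [div_le_iff₀ hmax]
  calc |∫ τ, ((z - τ) / ν) ^ k * gaussPdf ((z - τ) / ν) * ν⁻¹ ∂G|
      = |∫ τ, ((z - τ) / ν) ^ k * gaussPdf ((z - τ) / ν) ∂G| / ν := by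
        rw [integral_mul_const, abs_mul, abs_inv, abs_of_pos hν, div_eq_mul_inv]
    _ ≤ E * √(2 * L) ^ k * ((∫ τ, gaussPdf ((z - τ) / ν) ∂G) + gaussPdf √(2 * L))
          / ν := by
        gcongr
        exact abs_integral_pow_mul_gaussPdf_le (by fun_prop) k hT
    _ = E * √(2 * L) ^ k * (mixDens G ν z + ρ / ν) := by
        rw [mixDens, integral_mul_const, hφT]; field_simp
    _ ≤ E * √(2 * L) ^ k * (2 * (mixDens G ν z ⊔ ρ / ν)) := by
        gcongr
        linarith [le_max_left (mixDens G ν z) (ρ / ν), le_max_right (mixDens G ν z) (ρ / ν)]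
    _ = 2 * E * √2 ^ k * L ^ ((k : ℝ) / 2) * (mixDens G ν z ⊔ ρ / ν) := by
        rw [sqrt_two_mul_pow (by linarith)]; ring

/-- Regularized posterior `k`-th moment bound: for every integer `k ≥ 1` there is a
constant `C_k` depending only on `k` such that for all `G`, `ν > 0`, `z` and
`ρ ∈ (0, 1/(e√(2π)))`,
`|∫ ((z−τ)/ν)^k φ((z−τ)/ν) ν⁻¹ dG| / (f_{G,ν}(z) ∨ (ρ/ν)) ≤ C_k (log(1/(√(2π)ρ)))^{k/2}`. -/
theorem truncated_posterior_moment_bound (k : ℕ) (hk : 1 ≤ k) :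
    ∃ C : ℝ, 0 < C ∧
      ∀ (G : Measure ℝ), IsProbabilityMeasure G →
      ∀ (ν : ℝ), 0 < ν → ∀ (z : ℝ) (ρ : ℝ),
        ρ ∈ Set.Ioo (0:ℝ) (1 / (Real.exp 1 * Real.sqrt (2 * Real.pi))) →
        |∫ τ, ((z - τ) / ν) ^ k * gaussPdf ((z - τ) / ν) * ν⁻¹ ∂G|
            / (mixDens G ν z ⊔ (ρ / ν))
          ≤ C * (Real.log (1 / (Real.sqrt (2 * Real.pi) * ρ))) ^ ((k : ℝ) / 2) :=
  truncated_posterior_moment_bound_general k
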